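/- (Deterministic cumulative external regret bound) Let k ≥ 0, n ≥ 1, T ≥ 1, λ > 0, L > 0, and B ≥ 0. Let a_1, ..., a_T ∈ {1,...,n} and z_0, ..., z_{T-1} ∈ ℝ^{k+1} with ‖z_{t-1}‖₂ ≤ L for all t. Define Gram matrices V_0(a) = λ I_{k+1} for each a and V_t(a) = V_{t-1}(a) + z_{t-1} z_{t-1}^T · 1{a = a_t}. Let ρ_1, ..., ρ_T ≥ 0 satisfy ρ_t ≤ 2B · min{1, ‖z_{t-1}‖_{V_{t-1}(a_t)^{-1}}} for every t. Then Σ_{t=1}^T ρ_t ≤ 2B √( 2 T n (k+1) log(1 + T L² / (n λ (k+1))) ). -/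

import Mathlib

open Matrix Finset

/-!
The potential `Φ_s = ∑_a log det V_s(a)` increases in round `t` by exactly
`log (1 + ‖z_t‖²_{V_t(a_t)⁻¹})` (matrix determinant lemma), while the total trace
`∑_a tr V_T(a)` is at most `nλ(k+1) + TL²`. Viewing the eigenvalues of all `n` final Gram
matrices as one family of `n(k+1)` positive numbers, AM–GM bounds `Φ_T - Φ_0` by
`n(k+1) log(1 + TL²/(nλ(k+1)))`; this replaces the concavity argument over the allocation
of pulls. Since `min{1, x} ≤ 2 log(1 + x)`, Cauchy–Schwarz gives the bound.
-/

theorem Real.sum_log_le_card_mul_log_of_sum_le {κ : Type*} [Fintype κ] {x : κ → ℝ} {c : ℝ}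
    (hx : ∀ i, 0 < x i) (hsum : ∑ i, x i ≤ Fintype.card κ * c) :
    ∑ i, Real.log (x i) ≤ Fintype.card κ * Real.log c := by
  rcases isEmpty_or_nonempty κ with hκ | hκ
  · simp
  set N : ℝ := (Fintype.card κ : ℝ)
  have hN : 0 < N := Nat.cast_pos.2 Fintype.card_pos
  have jensen := strictConcaveOn_log_Ioi.concaveOn.le_map_sum (t := univ)
    (w := fun _ => N⁻¹) (p := x) (fun _ _ => by positivity) (by simp [N, hN.ne'])
    (fun i _ => hx i)
  simp only [smul_eq_mul, ← Finset.mul_sum] at jensen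
  have hmean : 0 < N⁻¹ * ∑ i, x i :=
    mul_pos (inv_pos.2 hN) (sum_pos (fun i _ => hx i) univ_nonempty)
  calc ∑ i, Real.log (x i) = N * (N⁻¹ * ∑ i, Real.log (x i)) := by field_simp
    _ ≤ N * Real.log (N⁻¹ * ∑ i, x i) := by gcongr
    _ ≤ N * Real.log c := by
        gcongr
        rwa [inv_mul_le_iff₀ hN]

theorem Real.min_one_le_two_mul_log_one_add {x : ℝ} (hx : 0 ≤ x) :
    min 1 x ≤ 2 * Real.log (1 + x) := by
  set y := min 1 x
  have hy0 : 0 ≤ y := le_min zero_le_one hx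
  have hy1 : y ≤ 1 := min_le_left _ _
  calc y ≤ 2 * (1 - (1 + y)⁻¹) := by
        rw [show 2 * (1 - (1 + y)⁻¹) = 2 * y / (1 + y) by field_simp; ring,
          le_div_iff₀ (by linarith)]
        nlinarith
    _ ≤ 2 * Real.log (1 + y) := by gcongr; exact Real.one_sub_inv_le_log_of_pos (by positivity)
    _ ≤ 2 * Real.log (1 + x) := by gcongr; exact min_le_right _ _

theorem Real.min_one_sqrt_sq_le_two_mul_log_one_add {x : ℝ} (hx : 0 ≤ x) :
    min 1 (√x) ^ 2 ≤ 2 * Real.log (1 + x) := by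
  have h : min 1 (√x) = √(min 1 x) := by rw [Real.sqrt_monotone.map_min, Real.sqrt_one]
  rw [h, Real.sq_sqrt (le_min zero_le_one hx)]
  exact Real.min_one_le_two_mul_log_one_add hx

theorem Finset.sum_le_sqrt_card_mul_sum_sq {ι : Type*} (s : Finset ι) (f : ι → ℝ) :
    ∑ i ∈ s, f i ≤ √(#s * ∑ i ∈ s, f i ^ 2) :=
  (le_abs_self _).trans (Real.abs_le_sqrt sq_sum_le_card_mul_sum_sq)

theorem Matrix.det_add_vecMulVec {m α : Type*} [Fintype m] [DecidableEq m] [CommRing α]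
    {A : Matrix m m α} (hA : IsUnit A.det) (u v : m → α) :
    (A + vecMulVec u v).det = A.det * (1 + v ⬝ᵥ (A⁻¹ *ᵥ u)) := by
  rw [vecMulVec_eq Unit, det_add_replicateCol_mul_replicateRow (ι := Unit) hA, Matrix.mul_assoc,
    ← replicateCol_mulVec, det_unique (n := Unit)]
  simp

theorem Matrix.sum_log_det_le_of_sum_trace_le {ι m : Type*} [Fintype ι] [Fintype m]
    [DecidableEq m] {M : ι → Matrix m m ℝ} (hM : ∀ i, (M i).PosDef) {c : ℝ}
    (h : ∑ i, (M i).trace ≤ (Fintype.card ι * Fintype.card m) * c) :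
    ∑ i, Real.log (M i).det ≤ (Fintype.card ι * Fintype.card m) * Real.log c := by
  have key := Real.sum_log_le_card_mul_log_of_sum_le (κ := ι × m) (c := c)
    (x := fun p => (hM p.1).1.eigenvalues p.2) (fun p => (hM p.1).eigenvalues_pos p.2)
  simp only [Fintype.sum_prod_type, Fintype.card_prod, Nat.cast_mul] at key
  have hdet : ∀ i, Real.log (M i).det = ∑ j, Real.log ((hM i).1.eigenvalues j) := fun i => by
    rw [(hM i).1.det_eq_prod_eigenvalues, RCLike.ofReal_real_eq_id]
    exact Real.log_prod fun j _ => ((hM i).eigenvalues_pos j).ne'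
  have htr : ∀ i, (M i).trace = ∑ j, (hM i).1.eigenvalues j := fun i => by
    simp [(hM i).1.trace_eq_sum_eigenvalues]
  simp only [hdet, htr] at h ⊢
  exact key h

section GramUpdate

variable {ι m : Type*} [DecidableEq ι] {T : ℕ} {a : Fin T → ι} {z : Fin T → m → ℝ}
  {V : ℕ → ι → Matrix m m ℝ}

variable (a z V) in
def IsGramUpdate : Prop :=
  ∀ (t : Fin T) (act : ι),
    V ((t : ℕ) + 1) act = V (t : ℕ) act + if act = a t then vecMulVec (z t) (z t) else 0

theorem posDef_of_gram_update [Fintype m] [DecidableEq m] (h0 : ∀ act, (V 0 act).PosDef)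
    (hV : IsGramUpdate a z V) :
    ∀ s ≤ T, ∀ act, (V s act).PosDef := by
  intro s
  induction s with
  | zero => exact fun _ => h0
  | succ s ih =>
    intro hs act
    rw [hV ⟨s, hs⟩ act]
    split_ifs
    · exact (ih (s.le_succ.trans hs) act).add_posSemidef (posSemidef_vecMulVec_self_star _)
    · simpa using ih (s.le_succ.trans hs) act

theorem sum_sub_sum_of_gram_update [Fintype ι] {R : Type*} [AddCommGroup R]
    (f : Matrix m m ℝ → R) (hV : IsGramUpdate a z V) :
    ∑ act, f (V T act) - ∑ act, f (V 0 act) =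
      ∑ t : Fin T, (f (V t (a t) + vecMulVec (z t) (z t)) - f (V t (a t))) := by
  have step : ∀ t : Fin T, ∑ act, f (V (t + 1) act) - ∑ act, f (V t act) =
      f (V t (a t) + vecMulVec (z t) (z t)) - f (V t (a t)) := fun t => by
    rw [← sum_sub_distrib]
    simp_rw [hV t]
    rw [Fintype.sum_eq_single (a t) fun act h => by simp [h]]
    simp
  rw [← Finset.sum_congr rfl fun t _ => step t,
    Fin.sum_univ_eq_sum_range (fun s => ∑ act, f (V (s + 1) act) - ∑ act, f (V s act)),
    Finset.sum_range_sub (fun s => ∑ act, f (V s act))]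

theorem sum_log_one_add_le_of_gram_update [Fintype ι] [Nonempty ι] [Fintype m]
    [DecidableEq m] [Nonempty m] {lam L : ℝ} (hlam : 0 < lam) (hV0 : ∀ act, V 0 act = lam • 1)
    (hV : IsGramUpdate a z V) (hz : ∀ t, ∑ i, z t i ^ 2 ≤ L ^ 2) :
    ∑ t : Fin T, Real.log (1 + z t ⬝ᵥ ((V t (a t))⁻¹ *ᵥ z t)) ≤
      (Fintype.card ι * Fintype.card m) *
        Real.log (1 + T * L ^ 2 / (Fintype.card ι * Fintype.card m * lam)) := by
  set N : ℝ := Fintype.card ι * Fintype.card m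
  have hN : 0 < N := by positivity
  have hpd := posDef_of_gram_update (fun act => by rw [hV0]; exact PosDef.one.smul hlam) hV
  have hlogdet := sum_sub_sum_of_gram_update (fun M => Real.log M.det) hV
  have htrace := sum_sub_sum_of_gram_update trace hV
  have hlogdet_step : ∀ t : Fin T,
      Real.log (V t (a t) + vecMulVec (z t) (z t)).det - Real.log (V t (a t)).det =
        Real.log (1 + z t ⬝ᵥ ((V t (a t))⁻¹ *ᵥ z t)) := fun t => by
    have hpdt := hpd t t.2.le (a t)
    have hquad : 0 ≤ z t ⬝ᵥ ((V t (a t))⁻¹ *ᵥ z t) :=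
      hpdt.inv.posSemidef.dotProduct_mulVec_nonneg _
    rw [det_add_vecMulVec (isUnit_iff_ne_zero.2 hpdt.det_pos.ne'),
      Real.log_mul hpdt.det_pos.ne' (by positivity), add_sub_cancel_left]
  have htrace_step : ∀ t : Fin T, (V t (a t) + vecMulVec (z t) (z t)).trace -
      (V t (a t)).trace = ∑ i, z t i ^ 2 := fun t => by
    simp [trace_add, trace_vecMulVec, dotProduct, sq]
  have hlogdet0 : ∑ act, Real.log (V 0 act).det = N * Real.log lam := by
    simp [hV0, Real.log_pow, N]
    ring
  have htrace0 : ∑ act, (V 0 act).trace = N * lam := by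
    simp [hV0, N]
    ring
  have hzsum : ∑ t : Fin T, ∑ i, z t i ^ 2 ≤ T * L ^ 2 := by
    simpa using Finset.sum_le_sum fun t (_ : t ∈ univ) => hz t
  set X := 1 + T * L ^ 2 / (N * lam)
  have hX : 0 < X := by positivity
  have hdetT := sum_log_det_le_of_sum_trace_le (hpd T le_rfl) (c := lam * X) (by
    rw [show N * (lam * X) = N * lam + T * L ^ 2 by simp only [X]; field_simp]
    simp only [htrace_step] at htrace
    linarith)
  rw [Real.log_mul hlam.ne' hX.ne'] at hdetT
  simp only [hlogdet_step] at hlogdet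
  linarith

end GramUpdate

theorem cumulative_external_regret_bound_general
    (k n T : ℕ) (hn : 1 ≤ n)
    (lam L B : ℝ) (hlam : 0 < lam) (hB : 0 ≤ B)
    (a : Fin T → Fin n) (z : Fin T → Fin (k + 1) → ℝ)
    (hz : ∀ t : Fin T, Real.sqrt (∑ i, (z t i) ^ 2) ≤ L)
    (V : ℕ → Fin n → Matrix (Fin (k + 1)) (Fin (k + 1)) ℝ)
    (hV0 : ∀ act : Fin n, V 0 act = lam • (1 : Matrix (Fin (k + 1)) (Fin (k + 1)) ℝ))
    (hVrec : ∀ (t : Fin T) (act : Fin n),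
      V ((t : ℕ) + 1) act =
        V (t : ℕ) act + if act = a t then Matrix.vecMulVec (z t) (z t) else 0)
    (ρ : Fin T → ℝ)
    (hρ : ∀ t : Fin T,
      ρ t ≤ 2 * B * min 1 (Real.sqrt (z t ⬝ᵥ ((V (t : ℕ) (a t))⁻¹ *ᵥ z t)))) :
    ∑ t, ρ t ≤
      2 * B * Real.sqrt (2 * T * n * ((k : ℝ) + 1) *
        Real.log (1 + T * L ^ 2 / (n * lam * (k + 1)))) := by
  have : Nonempty (Fin n) := ⟨⟨0, hn⟩⟩
  set w : Fin T → ℝ := fun t => z t ⬝ᵥ ((V t (a t))⁻¹ *ᵥ z t)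
  have hpd := posDef_of_gram_update (fun act => by rw [hV0]; exact PosDef.one.smul hlam) hVrec
  have hw : ∀ t, 0 ≤ w t := fun t =>
    (hpd t t.2.le (a t)).inv.posSemidef.dotProduct_mulVec_nonneg _
  have hpotential := sum_log_one_add_le_of_gram_update hlam hV0 hVrec
    fun t => (Real.sqrt_le_iff.1 (hz t)).2
  simp only [Fintype.card_fin, Nat.cast_add, Nat.cast_one, mul_right_comm _ _ lam] at hpotential
  have hsq : ∑ t, min 1 √(w t) ^ 2 ≤
      2 * (n * (k + 1) * Real.log (1 + T * L ^ 2 / (n * lam * (k + 1)))) :=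
    calc ∑ t, min 1 √(w t) ^ 2 ≤ ∑ t, 2 * Real.log (1 + w t) :=
          Finset.sum_le_sum fun t _ => Real.min_one_sqrt_sq_le_two_mul_log_one_add (hw t)
      _ ≤ _ := by rw [← Finset.mul_sum]; gcongr
  calc ∑ t, ρ t ≤ 2 * B * ∑ t, min 1 √(w t) := by
        rw [Finset.mul_sum]; exact Finset.sum_le_sum fun t _ => hρ t
    _ ≤ 2 * B * √(T * ∑ t, min 1 √(w t) ^ 2) := by
        gcongr; simpa using Finset.sum_le_sqrt_card_mul_sum_sq univ fun t => min 1 √(w t)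
    _ ≤ _ := by
        have := mul_le_mul_of_nonneg_left hsq (Nat.cast_nonneg T)
        gcongr 2 * B * √?_
        linarith

theorem cumulative_external_regret_bound
    (k n T : ℕ) (hn : 1 ≤ n) (hT : 1 ≤ T)
    (lam L B : ℝ) (hlam : 0 < lam) (hL : 0 < L) (hB : 0 ≤ B)
    (a : Fin T → Fin n) (z : Fin T → Fin (k + 1) → ℝ)
    (hz : ∀ t : Fin T, Real.sqrt (∑ i, (z t i) ^ 2) ≤ L)
    (V : ℕ → Fin n → Matrix (Fin (k + 1)) (Fin (k + 1)) ℝ)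
    (hV0 : ∀ act : Fin n, V 0 act = lam • (1 : Matrix (Fin (k + 1)) (Fin (k + 1)) ℝ))
    (hVrec : ∀ (t : Fin T) (act : Fin n),
      V ((t : ℕ) + 1) act =
        V (t : ℕ) act + if act = a t then Matrix.vecMulVec (z t) (z t) else 0)
    (ρ : Fin T → ℝ) (hρ0 : ∀ t, 0 ≤ ρ t)
    (hρ : ∀ t : Fin T,
      ρ t ≤ 2 * B * min 1 (Real.sqrt (z t ⬝ᵥ ((V (t : ℕ) (a t))⁻¹ *ᵥ z t)))) :
    ∑ t, ρ t ≤
      2 * B * Real.sqrt (2 * T * n * ((k : ℝ) + 1) *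
        Real.log (1 + T * L ^ 2 / (n * lam * (k + 1)))) :=
  cumulative_external_regret_bound_general k n T hn lam L B hlam hB a z hz V hV0 hVrec ρ hρ
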